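/- Let Q = (0,1)², let (T_j) be flat triangulated surfaces covering Q with size(T_j) → 0 and minimum triangle diameter ≥ ζ·size(T_j), and let B_j ⊂ T_j be subsets of 'bad' triangles. Fix v ∈ ℝ², δ > 0, and define A_j = {x ∈ Q : [x,x+v] ⊂ Q and #{K ∈ B_j : K ∩ [x,x+v] ≠ ∅} ≤ δ|v|/size(T_j)}. If #B_j · (size T_j)² → 0 as j → ∞, then the Lebesgue measure of {x ∈ Q : [x,x+v] ⊂ Q} \ A_j tends to 0. -/

import Mathlib

open MeasureTheory Filter
open scoped Classical

/-- The vertex set of a triangle given by its three vertices. -/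
def triVerts (t : EuclideanSpace ℝ (Fin 2) × EuclideanSpace ℝ (Fin 2) × EuclideanSpace ℝ (Fin 2)) :
    Set (EuclideanSpace ℝ (Fin 2)) := {t.1, t.2.1, t.2.2}

/-- The closed triangle (convex hull of the three vertices). -/
def triHull (t : EuclideanSpace ℝ (Fin 2) × EuclideanSpace ℝ (Fin 2) × EuclideanSpace ℝ (Fin 2)) :
    Set (EuclideanSpace ℝ (Fin 2)) := convexHull ℝ (triVerts t)

/-- The diameter of a triangle. -/
noncomputable def triDiam
    (t : EuclideanSpace ℝ (Fin 2) × EuclideanSpace ℝ (Fin 2) × EuclideanSpace ℝ (Fin 2)) : ℝ :=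
  Metric.diam (triHull t)

/-- The size of a flat triangulated surface: the maximal diameter of its triangles. -/
noncomputable def surfSize
    (T : Finset (EuclideanSpace ℝ (Fin 2) × EuclideanSpace ℝ (Fin 2) × EuclideanSpace ℝ (Fin 2))) :
    ℝ := sSup (triDiam '' (T : Set _))

/-- A flat triangulated surface: a finite collection of nondegenerate closed triangles
such that two distinct triangles intersect in the empty set, a common vertex, or a
common edge. -/
def IsFlatTriSurface
    (T : Finset (EuclideanSpace ℝ (Fin 2) × EuclideanSpace ℝ (Fin 2) × EuclideanSpace ℝ (Fin 2))) :
    Prop :=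
  (∀ t ∈ T, ¬ Collinear ℝ (triVerts t)) ∧
  ∀ s ∈ T, ∀ t ∈ T, s ≠ t →
    triHull s ∩ triHull t = ∅ ∨
    (∃ p, p ∈ triVerts s ∧ p ∈ triVerts t ∧ triHull s ∩ triHull t = {p}) ∨
    (∃ p q, p ≠ q ∧ p ∈ triVerts s ∧ p ∈ triVerts t ∧ q ∈ triVerts s ∧ q ∈ triVerts t ∧
      triHull s ∩ triHull t = segment ℝ p q)

/-- The unit square `Q = (0,1)²`. -/
def unitSq : Set (EuclideanSpace ℝ (Fin 2)) :=
  {x | x 0 ∈ Set.Ioo (0 : ℝ) 1 ∧ x 1 ∈ Set.Ioo (0 : ℝ) 1}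

/-- The segment `[x, x + v]` as a subset of the plane. -/
def segSet (x v : EuclideanSpace ℝ (Fin 2)) : Set (EuclideanSpace ℝ (Fin 2)) :=
  {y | ∃ t ∈ Set.Icc (0 : ℝ) 1, y = x + t • v}

/-!
The points `x` whose segment `[x, x + v]` meets a set of diameter at most `s` lie within `s` of a
segment of length `‖v‖`, so they are covered by `‖v‖ / s + 2` balls of radius `2 s` and form a set
of area `O(s (‖v‖ + s))`. Summing over the bad triangles bounds the integral of the number of bad
triangles met by `[x, x + v]` by `O(#B s (‖v‖ + s))`, and Markov's inequality at the threshold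
`δ ‖v‖ / s` leaves a set of measure `O((1 + δ⁻¹) #B s²)`, which tends to zero.
-/

open Metric Set Finset
open scoped ENNReal Real Topology

theorem mul_measure_le_card_filter_mem_le_sum {α ι : Type*} [MeasurableSpace α]
    (μ : Measure α) (s : Finset ι) {E : ι → Set α} (hE : ∀ i ∈ s, MeasurableSet (E i))
    (c : ℝ≥0∞) :
    c * μ {x | c ≤ #{i ∈ s | x ∈ E i}} ≤ ∑ i ∈ s, μ (E i) := by
  have hcount (x : α) : (#{i ∈ s | x ∈ E i} : ℝ≥0∞) = ∑ i ∈ s, (E i).indicator 1 x := by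
    simp [Set.indicator_apply]
  calc c * μ {x | c ≤ #{i ∈ s | x ∈ E i}}
      = c * μ {x | c ≤ ∑ i ∈ s, (E i).indicator 1 x} := by simp_rw [hcount]
    _ ≤ ∫⁻ x, ∑ i ∈ s, (E i).indicator 1 x ∂μ :=
      mul_meas_ge_le_lintegral
        (Finset.measurable_sum _ fun i hi => measurable_one.indicator (hE i hi)) c
    _ = ∑ i ∈ s, μ (E i) := by
      rw [lintegral_finsetSum' _ fun i hi => (measurable_one.indicator (hE i hi)).aemeasurable]
      exact Finset.sum_congr rfl fun i hi => lintegral_indicator_one (hE i hi)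

local notation "ℝ²" => EuclideanSpace ℝ (Fin 2)

def hitSet (S : Set ℝ²) (v : ℝ²) : Set ℝ² := {x | (S ∩ segSet x v).Nonempty}

theorem hitSet_eq_image (S : Set ℝ²) (v : ℝ²) :
    hitSet S v = (fun p : ℝ² × ℝ => p.1 - p.2 • v) '' (S ×ˢ Set.Icc 0 1) := by
  ext x
  constructor
  · rintro ⟨y, hy, t, ht, rfl⟩
    exact ⟨(x + t • v, t), ⟨hy, ht⟩, by simp⟩
  · rintro ⟨⟨y, t⟩, ⟨hy, ht⟩, rfl⟩
    exact ⟨y, hy, t, ht, by simp⟩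

theorem IsCompact.hitSet {S : Set ℝ²} (hS : IsCompact S) (v : ℝ²) : IsCompact (hitSet S v) := by
  rw [hitSet_eq_image]
  exact (hS.prod isCompact_Icc).image (continuous_fst.sub (continuous_snd.smul continuous_const))

theorem hitSet_subset_iUnion_closedBall {S : Set ℝ²} {p v : ℝ²} {r : ℝ}
    (hS : S ⊆ closedBall p r) {N : ℕ} (hN : 0 < N) (hvN : ‖v‖ ≤ N * r) :
    hitSet S v ⊆ ⋃ i ∈ Finset.range (N + 1), closedBall (p - ((i : ℝ) / N) • v) (2 * r) := by
  rintro x ⟨y, hy, t, ht, hyx⟩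
  have hN' : (0 : ℝ) < N := Nat.cast_pos.2 hN
  set i := ⌊t * N⌋₊
  have hi_le : (i : ℝ) ≤ t * N := Nat.floor_le (mul_nonneg ht.1 hN'.le)
  have hi_gt : t * N < i + 1 := Nat.lt_floor_add_one _
  have hiN : i < N + 1 := Nat.lt_succ_of_le (Nat.floor_le_of_le (by nlinarith [ht.2]))
  have hti : |(i : ℝ) / N - t| ≤ 1 / N := by
    rw [show (i : ℝ) / N - t = (i - t * N) / N by field_simp, abs_div, abs_of_pos hN',
      div_le_div_iff_of_pos_right hN', abs_le]
    constructor <;> linarith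
  refine mem_biUnion (Finset.mem_range.2 hiN) ?_
  have hx : x - (p - ((i : ℝ) / N) • v) = (y - p) + ((i : ℝ) / N - t) • v := by
    rw [hyx, sub_smul]; abel
  rw [mem_closedBall, dist_eq_norm, hx]
  calc ‖(y - p) + ((i : ℝ) / N - t) • v‖ ≤ ‖y - p‖ + |(i : ℝ) / N - t| * ‖v‖ := by
        rw [← Real.norm_eq_abs, ← norm_smul]; exact norm_add_le _ _
    _ ≤ r + 1 / N * (N * r) := by gcongr; exact mem_closedBall_iff_norm.1 (hS hy)
    _ = 2 * r := by field_simp; ring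

theorem volume_hitSet_le_of_pos {S : Set ℝ²} {p : ℝ²} {r : ℝ} (hS : S ⊆ closedBall p r)
    (hr : 0 < r) (v : ℝ²) :
    volume (hitSet S v) ≤ ENNReal.ofReal (4 * π * r * (‖v‖ + 2 * r)) := by
  set N := ⌊‖v‖ / r⌋₊ + 1
  have hvN : ‖v‖ ≤ N * r := by
    rw [← div_le_iff₀ hr]
    exact (Nat.lt_floor_add_one _).le.trans (by simp [N])
  have hN : (N : ℝ) + 1 ≤ ‖v‖ / r + 2 := by
    have := Nat.floor_le (div_nonneg (norm_nonneg v) hr.le)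
    simp only [N, Nat.cast_add, Nat.cast_one]
    linarith
  calc volume (hitSet S v)
      ≤ ∑ i ∈ Finset.range (N + 1), volume (closedBall (p - ((i : ℝ) / N) • v) (2 * r)) :=
        (measure_mono (hitSet_subset_iUnion_closedBall hS (N := N) (Nat.succ_pos _) hvN)).trans
          (measure_biUnion_finset_le _ _)
    _ = ENNReal.ofReal ((N + 1) * ((2 * r) ^ 2 * π)) := by
        simp only [EuclideanSpace.volume_closedBall_fin_two, Finset.sum_const,
          Finset.card_range, nsmul_eq_mul]
        rw [← ENNReal.ofReal_pow (by positivity), ← ENNReal.ofReal_mul (by positivity),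
          ← ENNReal.ofReal_natCast, ← ENNReal.ofReal_mul (by positivity), Nat.cast_add_one]
    _ ≤ ENNReal.ofReal ((‖v‖ / r + 2) * ((2 * r) ^ 2 * π)) := by gcongr
    _ = ENNReal.ofReal (4 * π * r * (‖v‖ + 2 * r)) := by congr 1; field_simp; ring

theorem volume_hitSet_le {S : Set ℝ²} {p : ℝ²} {r : ℝ} (hS : S ⊆ closedBall p r)
    (hr : 0 ≤ r) (v : ℝ²) :
    volume (hitSet S v) ≤ ENNReal.ofReal (4 * π * r * (‖v‖ + 2 * r)) := by
  have hlim : Tendsto (fun ε => ENNReal.ofReal (4 * π * ε * (‖v‖ + 2 * ε))) (𝓝[>] r)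
      (𝓝 (ENNReal.ofReal (4 * π * r * (‖v‖ + 2 * r)))) :=
    (ENNReal.tendsto_ofReal (Continuous.tendsto (by fun_prop) r)).mono_left nhdsWithin_le_nhds
  refine ge_of_tendsto hlim (eventually_nhdsWithin_of_forall fun ε (hε : r < ε) => ?_)
  exact volume_hitSet_le_of_pos (hS.trans (closedBall_subset_closedBall hε.le))
    (hr.trans_lt hε) v

theorem volume_setOf_lt_card_hitSet_le {ι : Type*} (B : Finset ι) {S : ι → Set ℝ²}
    {p : ι → ℝ²} {s δ : ℝ} (hSc : ∀ i ∈ B, IsCompact (S i))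
    (hS : ∀ i ∈ B, S i ⊆ closedBall (p i) s) (hs : 0 ≤ s) (hδ : 0 < δ) (v : ℝ²) :
    volume {x | δ * ‖v‖ / s < #{i ∈ B | x ∈ hitSet (S i) v}} ≤
      ENNReal.ofReal (4 * π * (δ⁻¹ + 2) * (#B * s ^ 2)) := by
  -- `max 1` keeps the Markov threshold positive, also when `s = 0` and `δ * ‖v‖ / s` is junk
  set c := max 1 (δ * ‖v‖ / s)
  have hc : 0 < c := lt_max_of_lt_left one_pos
  have hsub : {x | δ * ‖v‖ / s < #{i ∈ B | x ∈ hitSet (S i) v}} ⊆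
      {x | ENNReal.ofReal c ≤ #{i ∈ B | x ∈ hitSet (S i) v}} := by
    intro x (hx : δ * ‖v‖ / s < _)
    have hpos : 0 < #{i ∈ B | x ∈ hitSet (S i) v} := by
      exact_mod_cast (by positivity : 0 ≤ δ * ‖v‖ / s).trans_lt hx
    show ENNReal.ofReal c ≤ _
    rw [← ENNReal.ofReal_natCast, ENNReal.ofReal_le_ofReal_iff (Nat.cast_nonneg _)]
    exact max_le (by exact_mod_cast hpos) hx.le
  have hmarkov := mul_measure_le_card_filter_mem_le_sum volume B
    (fun i hi => ((hSc i hi).hitSet v).isClosed.measurableSet) (ENNReal.ofReal c)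
  have hsum : ∑ i ∈ B, volume (hitSet (S i) v) ≤
      ENNReal.ofReal (#B * (4 * π * s * (‖v‖ + 2 * s))) := by
    rw [ENNReal.ofReal_mul (Nat.cast_nonneg _), ENNReal.ofReal_natCast, ← nsmul_eq_mul]
    exact Finset.sum_le_card_nsmul _ _ _ fun i hi => volume_hitSet_le (hS i hi) hs v
  have hreal : #B * (4 * π * s * (‖v‖ + 2 * s)) ≤
      c * (4 * π * (δ⁻¹ + 2) * (#B * s ^ 2)) := by
    have h1 : s * ‖v‖ ≤ c * δ⁻¹ * s ^ 2 := by
      rcases hs.eq_or_lt with rfl | hs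
      · simp
      calc s * ‖v‖ = δ * ‖v‖ / s * δ⁻¹ * s ^ 2 := by field_simp
        _ ≤ c * δ⁻¹ * s ^ 2 := by gcongr; exact le_max_right _ _
    have h2 : 2 * s ^ 2 ≤ c * 2 * s ^ 2 := by
      nlinarith [le_max_left 1 (δ * ‖v‖ / s), sq_nonneg s]
    calc #B * (4 * π * s * (‖v‖ + 2 * s)) = 4 * π * #B * (s * ‖v‖ + 2 * s ^ 2) := by ring
      _ ≤ 4 * π * #B * (c * δ⁻¹ * s ^ 2 + c * 2 * s ^ 2) := by gcongr
      _ = c * (4 * π * (δ⁻¹ + 2) * (#B * s ^ 2)) := by ring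
  rw [← ENNReal.mul_le_mul_iff_right (ENNReal.ofReal_pos.2 hc).ne' ENNReal.ofReal_ne_top,
    ← ENNReal.ofReal_mul hc.le]
  exact (mul_le_mul_right (measure_mono hsub) _).trans
    ((hmarkov.trans hsum).trans (ENNReal.ofReal_le_ofReal hreal))

abbrev Triangle := ℝ² × ℝ² × ℝ²

theorem isCompact_triHull (t : Triangle) : IsCompact (triHull t) :=
  (((finite_singleton _).insert _).insert _ : (triVerts t).Finite).isCompact_convexHull ℝ

theorem triHull_subset_closedBall (t : Triangle) : triHull t ⊆ closedBall t.1 (triDiam t) :=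
  fun _ hy => dist_le_diam_of_mem (isCompact_triHull t).isBounded hy
    (subset_convexHull ℝ _ (mem_insert _ _))

theorem surfSize_nonneg (T : Finset Triangle) : 0 ≤ surfSize T :=
  Real.sSup_nonneg fun _ ⟨_, _, hd⟩ => hd ▸ diam_nonneg

theorem triDiam_le_surfSize {T : Finset Triangle} {t : Triangle} (ht : t ∈ T) :
    triDiam t ≤ surfSize T :=
  le_csSup (T.finite_toSet.image triDiam).bddAbove (mem_image_of_mem _ ht)

theorem measure_bad_points_tendsto_zero_general
    (δ : ℝ) (hδ : 0 < δ) (v : EuclideanSpace ℝ (Fin 2))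
    (T B : ℕ → Finset
      (EuclideanSpace ℝ (Fin 2) × EuclideanSpace ℝ (Fin 2) × EuclideanSpace ℝ (Fin 2)))
    (hB : ∀ j, B j ⊆ T j)
    (hbad : Tendsto (fun j => ((B j).card : ℝ) * surfSize (T j) ^ 2) atTop (nhds 0)) :
    Tendsto
      (fun j => volume
        ({x | segSet x v ⊆ unitSq} \
          {x | segSet x v ⊆ unitSq ∧
            (((B j).filter (fun K => (triHull K ∩ segSet x v).Nonempty)).card : ℝ) ≤
              δ * ‖v‖ / surfSize (T j)}))
      atTop (nhds 0) := by
  have hlim : Tendsto (fun j => ENNReal.ofReal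
      (4 * π * (δ⁻¹ + 2) * ((B j).card * surfSize (T j) ^ 2))) atTop (𝓝 0) := by
    simpa using ENNReal.tendsto_ofReal (hbad.const_mul (4 * π * (δ⁻¹ + 2)))
  refine tendsto_of_tendsto_of_tendsto_of_le_of_le tendsto_const_nhds hlim (fun _ => zero_le)
    fun j => (measure_mono ?_).trans (volume_setOf_lt_card_hitSet_le (B j)
      (fun K _ => isCompact_triHull K)
      (fun K hK => (triHull_subset_closedBall K).trans
        (closedBall_subset_closedBall (triDiam_le_surfSize (hB j hK))))
      (surfSize_nonneg (T j)) hδ v)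
  rintro x ⟨hxQ, hxA⟩
  exact lt_of_not_ge fun hle => hxA ⟨hxQ, hle⟩

/-- If `(T_j)` are `ζ`-regular flat triangulated surfaces covering the unit square `Q`
with `size(T_j) → 0`, `B_j ⊆ T_j` are sets of bad triangles with
`#B_j · size(T_j)² → 0`, and
`A_j = {x ∈ Qᵛ : #{K ∈ B_j : K ∩ [x,x+v] ≠ ∅} ≤ δ|v|/size(T_j)}`, then the Lebesgue
measure of `Qᵛ \ A_j` tends to `0`, where `Qᵛ = {x : [x,x+v] ⊆ Q}`. -/
theorem measure_bad_points_tendsto_zero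
    (ζ δ : ℝ) (hζ : 0 < ζ) (hδ : 0 < δ) (v : EuclideanSpace ℝ (Fin 2))
    (T B : ℕ → Finset
      (EuclideanSpace ℝ (Fin 2) × EuclideanSpace ℝ (Fin 2) × EuclideanSpace ℝ (Fin 2)))
    (hsurf : ∀ j, IsFlatTriSurface (T j))
    (hcover : ∀ j, unitSq ⊆ ⋃ t ∈ (T j : Set _), triHull t)
    (hsize : Tendsto (fun j => surfSize (T j)) atTop (nhds 0))
    (hreg : ∀ j, ∀ t ∈ T j, ζ * surfSize (T j) ≤ triDiam t)
    (hB : ∀ j, B j ⊆ T j)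
    (hbad : Tendsto (fun j => ((B j).card : ℝ) * surfSize (T j) ^ 2) atTop (nhds 0)) :
    Tendsto
      (fun j => volume
        ({x | segSet x v ⊆ unitSq} \
          {x | segSet x v ⊆ unitSq ∧
            (((B j).filter (fun K => (triHull K ∩ segSet x v).Nonempty)).card : ℝ) ≤
              δ * ‖v‖ / surfSize (T j)}))
      atTop (nhds 0) :=
  measure_bad_points_tendsto_zero_general δ hδ v T B hB hbad
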